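/- For every integer n ≥ 2, the product of sin(πk/n) over all integers k with 1 ≤ k ≤ n−1 and gcd(k,n) = 1 equals exp(Λ(n)) / 2^(φ(n)), where Λ is the von Mangoldt function and φ is Euler's totient function. -/

import Mathlib

/-!
The numbers `2 sin (π k / n)` with `k` coprime to `n` are the absolute values of `1 - ζ ^ k` for
the primitive `n`-th root of unity `ζ = exp (2 π i / n)`, and `∏ (1 - ζ ^ k)` over these `k` is the
value `Φₙ(1)` of the `n`-th cyclotomic polynomial, which is `p` if `n` is a power of the prime
`p` and `1` otherwise, that is, `exp (Λ n)`.
-/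

open Real Finset Polynomial

open scoped ArithmeticFunction.vonMangoldt

namespace IsPrimitiveRoot

variable {R : Type*} [CommRing R] [IsDomain R] {ζ : R} {n : ℕ}

theorem prod_primitiveRoots_eq_prod_pow {M : Type*} [CommMonoid M] (hζ : IsPrimitiveRoot ζ n)
    (f : R → M) :
    ∏ ξ ∈ primitiveRoots n R, f ξ = ∏ i ∈ (range n).filter n.Coprime, f (ζ ^ i) := by
  rcases n.eq_zero_or_pos with rfl | hn
  · simp
  have : NeZero n := ⟨hn.ne'⟩
  symm
  refine prod_bij (fun i _ ↦ ζ ^ i) ?_ ?_ ?_ (fun _ _ ↦ rfl)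
  · intro i hi
    rw [mem_primitiveRoots hn]
    exact hζ.pow_of_coprime i (mem_filter.mp hi).2.symm
  · intro i hi j hj H
    exact hζ.pow_inj (mem_range.mp (mem_filter.mp hi).1) (mem_range.mp (mem_filter.mp hj).1) H
  · intro ξ hξ
    obtain ⟨i, hin, hi, rfl⟩ := hζ.isPrimitiveRoot_iff.mp ((mem_primitiveRoots hn).mp hξ)
    exact ⟨i, mem_filter.mpr ⟨mem_range.mpr hin, hi.symm⟩, rfl⟩

theorem eval_one_cyclotomic_eq_prod (hζ : IsPrimitiveRoot ζ n) :
    eval 1 (cyclotomic n R) = ∏ i ∈ (range n).filter n.Coprime, (1 - ζ ^ i) := by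
  rw [cyclotomic_eq_prod_X_sub_primitiveRoots hζ, eval_prod,
    hζ.prod_primitiveRoots_eq_prod_pow (fun ξ ↦ eval 1 (X - C ξ))]
  simp only [eval_sub, eval_X, eval_C]

end IsPrimitiveRoot

theorem Polynomial.eval_one_cyclotomic_eq_exp_vonMangoldt {n : ℕ} (hn : n ≠ 1) :
    eval 1 (cyclotomic n ℝ) = exp (Λ n) := by
  by_cases h : IsPrimePow n
  · obtain ⟨p, k, hp, hk, rfl⟩ := (isPrimePow_nat_iff n).mp h
    have : Fact p.Prime := ⟨hp⟩
    obtain ⟨j, rfl⟩ := Nat.exists_eq_add_one_of_ne_zero hk.ne'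
    rw [eval_one_cyclotomic_prime_pow, ArithmeticFunction.vonMangoldt_apply_pow hk.ne',
      ArithmeticFunction.vonMangoldt_apply_prime hp, exp_log (by exact_mod_cast hp.pos)]
  · rw [ArithmeticFunction.vonMangoldt_eq_zero_iff.mpr h, exp_zero]
    refine eval_one_cyclotomic_not_prime_pow fun {p} hp k hpk ↦ ?_
    rcases k.eq_zero_or_pos with rfl | hk
    · exact hn (by simpa using hpk.symm)
    · exact h ((isPrimePow_nat_iff n).mpr ⟨p, k, hp, hk, hpk⟩)

theorem Complex.norm_one_sub_exp_two_pi_I_div_pow {k n : ℕ} (hk : k ≤ n) :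
    ‖1 - exp (2 * π * I / n) ^ k‖ = 2 * Real.sin (π * k / n) := by
  have hθ : exp (2 * π * I / n) ^ k = exp (I * ((2 * π * k / n : ℝ) : ℂ)) := by
    rw [← exp_nat_mul]
    push_cast
    ring_nf
  have hsin : 0 ≤ Real.sin (π * k / n) := by
    rcases n.eq_zero_or_pos with rfl | hn
    · simp
    apply sin_nonneg_of_nonneg_of_le_pi (by positivity)
    rw [div_le_iff₀ (by exact_mod_cast hn)]
    exact mul_le_mul_of_nonneg_left (by exact_mod_cast hk) pi_pos.le
  rw [hθ, norm_sub_rev, norm_exp_I_mul_ofReal_sub_one, show 2 * π * k / n / 2 = π * k / n by ring,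
    Real.norm_of_nonneg (mul_nonneg zero_le_two hsin)]

theorem Nat.filter_gcd_eq_one_Icc_eq_filter_coprime_range {n : ℕ} (hn : n ≠ 1) :
    (Icc 1 (n - 1)).filter (fun k ↦ k.gcd n = 1) = (range n).filter n.Coprime := by
  ext k
  simp only [mem_filter, mem_Icc, mem_range, Nat.coprime_comm (m := n), Nat.Coprime]
  constructor
  · rintro ⟨⟨hk, hkn⟩, hgcd⟩
    exact ⟨by omega, hgcd⟩
  · rintro ⟨hkn, hgcd⟩
    have hk : k ≠ 0 := by
      rintro rfl
      exact hn (by simpa using hgcd)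
    exact ⟨⟨by omega, by omega⟩, hgcd⟩

theorem sin_prod_coprime (n : ℕ) (hn : 2 ≤ n) :
    ∏ k ∈ (Finset.Icc 1 (n - 1)).filter (fun k => Nat.gcd k n = 1),
        Real.sin (π * k / n) =
      Real.exp (ArithmeticFunction.vonMangoldt n) / 2 ^ n.totient := by
  have hζ := Complex.isPrimitiveRoot_exp n (by omega)
  rw [Nat.filter_gcd_eq_one_Icc_eq_filter_coprime_range (by omega), eq_div_iff (by positivity)]
  calc (∏ k ∈ (range n).filter n.Coprime, sin (π * k / n)) * 2 ^ n.totient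
      = ∏ k ∈ (range n).filter n.Coprime, 2 * sin (π * k / n) := by
        rw [prod_mul_distrib, prod_const, Nat.totient, mul_comm]
    _ = ∏ k ∈ (range n).filter n.Coprime, ‖1 - Complex.exp (2 * π * Complex.I / n) ^ k‖ :=
        prod_congr rfl fun k hk ↦ (Complex.norm_one_sub_exp_two_pi_I_div_pow
          (mem_range.mp (mem_filter.mp hk).1).le).symm
    _ = ‖eval 1 (cyclotomic n ℂ)‖ := by rw [hζ.eval_one_cyclotomic_eq_prod, norm_prod]
    _ = exp (Λ n) := by
        rw [← Complex.ofReal_one, cyclotomic.eval_apply_ofReal, Complex.norm_real,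
          eval_one_cyclotomic_eq_exp_vonMangoldt (by omega), Real.norm_of_nonneg (exp_pos _).le]
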